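/- arXiv:1604.00892 — 2 statements merged into one kernel-verified Lean document; each statement's English description precedes it below -/
import Mathlib

section
/- Suppose G and H are finitely generated groups with fixed word lengths |·|_G and |·|_H, that (X,μ,T) is a G-system, and that σ : G × X → H is a measurable cocycle over T which is integrable, i.e. ∫_X |σ(g,x)|_H μ(dx) < ∞ for every g ∈ G. Then for every g ∈ G and every ε > 0 there exists δ > 0 such that for every measurable U ⊆ X: if μ(U) < δ then H_μ(σ(g,·); U) < ε. -/
open MeasureTheory
open scoped ENNReal

/-- The word length of `g` with respect to the generating set `S`. -/
noncomputable def wordLength {G : Type*} [Group G] (S : Set G) (g : G) : ℕ :=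
  sInf {n | ∃ l : List G, l.length = n ∧ (∀ s ∈ l, s ∈ S) ∧ l.prod = g}

/-- Shannon entropy of a measurable set: `H_μ(U) = -μ(U) log μ(U) - μ(X\U) log μ(X\U)`. -/
noncomputable def setEntropy {X : Type*} [MeasurableSpace X] (μ : Measure X) (U : Set X) :
    ℝ≥0∞ :=
  ENNReal.ofReal (Real.negMulLog (μ U).toReal + Real.negMulLog (μ Uᶜ).toReal)

/-- Shannon entropy of an observable: `H_μ(φ) = Σ_h -μ(φ = h) log μ(φ = h)`. -/
noncomputable def obsEntropy {X H : Type*} [MeasurableSpace X] (μ : Measure X) (φ : X → H) :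
    ℝ≥0∞ :=
  ∑' h : H, ENNReal.ofReal (Real.negMulLog ((μ (φ ⁻¹' {h})).toReal))

/-- Shannon entropy of the partial observable `(φ, U)`:
`H_μ(φ; U) = H_μ(U) + μ(U) · H_{μ|U}(φ)`.  (When `μ U = 0` this is `0`.) -/
noncomputable def partialObsEntropy {X H : Type*} [MeasurableSpace X] (μ : Measure X)
    (φ : X → H) (U : Set X) : ℝ≥0∞ :=
  setEntropy μ U + μ U * obsEntropy (ProbabilityTheory.cond μ U) φ

/-!
Gibbs' inequality against the weights `b ^ (-|h|)`, with `b = |S| + 1`, bounds the entropy of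
`σ(g, ·)` under `μ|U` by `log b · E_{μ|U} |σ(g, ·)| + ∑_h b ^ (-|h|)`, and the sum is finite since
at most `|S| ^ n` elements of `H` have length `n`. Multiplied by `μ U`, this becomes the integral
over `U` of a fixed integrable function, which is small when `μ U` is (absolute continuity of the
integral); the remaining term `H_μ(U)` tends to `0` with `μ U` by continuity of `t ↦ -t log t`.
-/

open ProbabilityTheory

lemma Real.negMulLog_le_mul_log_inv_add {p q : ℝ} (hp : 0 ≤ p) (hq : 0 < q) :
    Real.negMulLog p ≤ p * Real.log q⁻¹ + q := by
  rcases hp.eq_or_lt with rfl | hp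
  · simp [hq.le]
  have hlog : p * Real.log (q / p) ≤ q - p := by
    calc p * Real.log (q / p) ≤ p * (q / p - 1) :=
          mul_le_mul_of_nonneg_left (Real.log_le_sub_one_of_pos (by positivity)) hp.le
      _ = q - p := by field_simp
  have hsplit : Real.negMulLog p = p * Real.log (q / p) + p * Real.log q⁻¹ := by
    rw [Real.negMulLog, Real.log_div hq.ne' hp.ne', Real.log_inv]; ring
  linarith

lemma lintegral_comp_eq_tsum_mul_measure_preimage {X H : Type*} [MeasurableSpace X] [Countable H]
    (ν : Measure X) {φ : X → H} (hφ : ∀ h, MeasurableSet (φ ⁻¹' {h})) (f : H → ℝ≥0∞) :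
    ∫⁻ x, f (φ x) ∂ν = ∑' h, f h * ν (φ ⁻¹' {h}) := by
  let _ : MeasurableSpace H := ⊤
  have hφm : Measurable φ := measurable_to_countable' hφ
  rw [← lintegral_map (measurable_of_countable f) hφm, lintegral_countable']
  simp_rw [Measure.map_apply hφm (measurableSet_singleton _)]

lemma exists_list_length_eq_wordLength {H : Type*} [Group H] {S : Set H}
    (hSsym : ∀ s ∈ S, s⁻¹ ∈ S) (hSgen : Subgroup.closure S = ⊤) (h : H) :
    ∃ l : List H, l.length = wordLength S h ∧ (∀ s ∈ l, s ∈ S) ∧ l.prod = h := by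
  have hS : S ∪ S⁻¹ = S := Set.union_eq_left.2 fun s hs => by
    simpa using hSsym _ (Set.mem_inv.1 hs)
  have hmem : h ∈ Submonoid.closure S := by
    rw [← hS, ← Subgroup.closure_toSubmonoid, hSgen]; trivial
  obtain ⟨l, hlS, hl⟩ := Submonoid.exists_list_of_mem_closure hmem
  exact Nat.sInf_mem (s := {n | ∃ l : List H, l.length = n ∧ _})
    ⟨l.length, l, rfl, hlS, hl⟩

lemma exists_injective_length_eq_wordLength {H : Type*} [Group H] {S : Set H}
    (hSsym : ∀ s ∈ S, s⁻¹ ∈ S) (hSgen : Subgroup.closure S = ⊤) :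
    ∃ W : H → List S, Function.Injective W ∧ ∀ h, (W h).length = wordLength S h := by
  choose w hwlen hwS hwprod using exists_list_length_eq_wordLength hSsym hSgen
  refine ⟨fun h => (w h).attachWith (· ∈ S) (hwS h), ?_, fun h => by simp [hwlen]⟩
  refine Function.LeftInverse.injective (g := fun l => (l.map Subtype.val).prod) fun h => ?_
  simp [hwprod]

lemma ENNReal.tsum_pow_length {α : Type*} [Fintype α] (r : ℝ≥0∞) :
    ∑' l : List α, r ^ l.length = ∑' n : ℕ, (Fintype.card α * r) ^ n := by
  rw [← List.equivSigmaTuple.symm.tsum_eq, ENNReal.tsum_sigma']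
  refine tsum_congr fun n => ?_
  simp [List.equivSigmaTuple, mul_pow]

lemma tsum_pow_wordLength_le {H : Type*} [Group H] {S : Set H} (hSfin : S.Finite)
    (hSsym : ∀ s ∈ S, s⁻¹ ∈ S) (hSgen : Subgroup.closure S = ⊤) (r : ℝ≥0∞) :
    ∑' h, r ^ wordLength S h ≤ (1 - Nat.card S * r)⁻¹ := by
  have := hSfin.fintype
  obtain ⟨W, hWinj, hWlen⟩ := exists_injective_length_eq_wordLength hSsym hSgen
  calc ∑' h, r ^ wordLength S h = ∑' h, r ^ (W h).length := by simp_rw [hWlen]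
    _ ≤ ∑' l : List S, r ^ l.length := ENNReal.tsum_comp_le_tsum_of_injective hWinj _
    _ = (1 - Nat.card S * r)⁻¹ := by
      rw [ENNReal.tsum_pow_length, ENNReal.tsum_geometric, Nat.card_eq_fintype_card]

lemma obsEntropy_le_lintegral {X H : Type*} [MeasurableSpace X] [Countable H] (ν : Measure X)
    [IsProbabilityMeasure ν] {φ : X → H} (hφ : ∀ h, MeasurableSet (φ ⁻¹' {h})) (L : H → ℕ)
    {b : ℝ} (hb : 0 < b) :
    obsEntropy ν φ ≤ ∫⁻ x, (ENNReal.ofReal (Real.log b) * L (φ x) +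
      ∑' h, (ENNReal.ofReal b)⁻¹ ^ L h) ∂ν := by
  have hterm : ∀ h, ENNReal.ofReal (Real.negMulLog (ν (φ ⁻¹' {h})).toReal) ≤
      ENNReal.ofReal (Real.log b) * L h * ν (φ ⁻¹' {h}) + (ENNReal.ofReal b)⁻¹ ^ L h := by
    intro h
    have key := Real.negMulLog_le_mul_log_inv_add
      (ENNReal.toReal_nonneg (a := ν (φ ⁻¹' {h}))) (pow_pos (inv_pos.2 hb) (L h))
    rw [← inv_pow, inv_inv, Real.log_pow] at key
    calc _ ≤ ENNReal.ofReal ((ν (φ ⁻¹' {h})).toReal * (L h * Real.log b)) +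
          ENNReal.ofReal (b⁻¹ ^ L h) :=
          (ENNReal.ofReal_le_ofReal key).trans ENNReal.ofReal_add_le
      _ = _ := by
        rw [ENNReal.ofReal_mul ENNReal.toReal_nonneg, ENNReal.ofReal_toReal (measure_ne_top _ _),
          ENNReal.ofReal_mul (Nat.cast_nonneg _), ENNReal.ofReal_natCast,
          ENNReal.ofReal_pow (inv_nonneg.2 hb.le), ENNReal.ofReal_inv_of_pos hb]
        ring
  calc obsEntropy ν φ ≤ ∑' h, (ENNReal.ofReal (Real.log b) * L h * ν (φ ⁻¹' {h}) +
        (ENNReal.ofReal b)⁻¹ ^ L h) := ENNReal.tsum_le_tsum hterm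
    _ = _ := by
      rw [lintegral_add_right _ measurable_const, lintegral_const, measure_univ, mul_one,
        lintegral_const_mul' _ _ ENNReal.ofReal_ne_top,
        lintegral_comp_eq_tsum_mul_measure_preimage ν hφ (fun h => (L h : ℝ≥0∞)),
        ENNReal.tsum_add, ← ENNReal.tsum_mul_left]
      simp_rw [mul_assoc]

lemma mul_lintegral_cond {X : Type*} [MeasurableSpace X] (μ : Measure X) {U : Set X}
    (hU : μ U ≠ ∞) (f : X → ℝ≥0∞) :
    μ U * ∫⁻ x, f x ∂μ[|U] = ∫⁻ x in U, f x ∂μ := by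
  rcases eq_or_ne (μ U) 0 with hU0 | hU0
  · simp [hU0, Measure.restrict_eq_zero.2 hU0]
  · rw [ProbabilityTheory.cond, lintegral_smul_measure, smul_eq_mul, ← mul_assoc,
      ENNReal.mul_inv_cancel hU0 hU, one_mul]

lemma mul_obsEntropy_cond_le_setLIntegral {X H : Type*} [MeasurableSpace X] [Countable H]
    (μ : Measure X) [IsFiniteMeasure μ] {φ : X → H} (hφ : ∀ h, MeasurableSet (φ ⁻¹' {h}))
    (L : H → ℕ) {b : ℝ} (hb : 0 < b) (U : Set X) :
    μ U * obsEntropy μ[|U] φ ≤ ∫⁻ x in U, (ENNReal.ofReal (Real.log b) * L (φ x) +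
      ∑' h, (ENNReal.ofReal b)⁻¹ ^ L h) ∂μ := by
  rcases eq_or_ne (μ U) 0 with hU0 | hU0
  · simp [hU0]
  have := cond_isProbabilityMeasure (μ := μ) hU0
  rw [← mul_lintegral_cond μ (measure_ne_top μ U)]
  exact mul_le_mul_right (obsEntropy_le_lintegral _ hφ L hb) _

lemma exists_pos_setEntropy_lt {X : Type*} [MeasurableSpace X] (μ : Measure X)
    [IsProbabilityMeasure μ] {ε : ℝ} (hε : 0 < ε) :
    ∃ δ > 0, ∀ U, MeasurableSet U → μ U < δ → setEntropy μ U < ENNReal.ofReal ε := by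
  have hcont : ContinuousAt (fun t => Real.negMulLog t + Real.negMulLog (1 - t)) 0 := by
    fun_prop
  obtain ⟨δ, hδ, hδε⟩ := Metric.continuousAt_iff.1 hcont ε hε
  refine ⟨ENNReal.ofReal δ, ENNReal.ofReal_pos.2 hδ, fun U hU hUδ => ?_⟩
  have hUc : (μ Uᶜ).toReal = 1 - (μ U).toReal := by
    rw [prob_compl_eq_one_sub hU, ENNReal.toReal_sub_of_le prob_le_one ENNReal.one_ne_top,
      ENNReal.toReal_one]
  have hdist : dist (μ U).toReal 0 < δ := by
    rw [Real.dist_eq, sub_zero, abs_of_nonneg ENNReal.toReal_nonneg]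
    exact ENNReal.toReal_lt_of_lt_ofReal hUδ
  have := hδε hdist
  rw [setEntropy, hUc, ENNReal.ofReal_lt_ofReal_iff hε]
  simp only [Real.dist_eq, sub_zero, Real.negMulLog_zero, Real.negMulLog_one, add_zero] at this
  exact (le_abs_self _).trans_lt this

theorem stmt2_general {G H X : Type*} [Group H]
    [MeasurableSpace X]
    (SH : Set H) (hSHfin : SH.Finite) (hSHsym : ∀ s ∈ SH, s⁻¹ ∈ SH)
    (hSHgen : Subgroup.closure SH = ⊤)
    (μ : Measure X) [IsProbabilityMeasure μ]
    (σ : G → X → H)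
    (hσmeas : ∀ (g : G) (h : H), MeasurableSet {x : X | σ g x = h})
    (hσint : ∀ g : G, (∫⁻ x, (wordLength SH (σ g x) : ℝ≥0∞) ∂μ) ≠ ∞)
    (g : G) {ε : ℝ} (hε : 0 < ε) :
    ∃ δ : ℝ, 0 < δ ∧ ∀ U : Set X, MeasurableSet U → μ U < ENNReal.ofReal δ →
      partialObsEntropy μ (σ g) U < ENNReal.ofReal ε := by
  have := hSHfin.to_subtype
  have : Countable H :=
    (exists_injective_length_eq_wordLength hSHsym hSHgen).choose_spec.1.countable
  set b : ℝ := Nat.card SH + 1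
  have hb : ENNReal.ofReal b = Nat.card SH + 1 := by simp [b]; norm_cast
  have hK : ∑' h, (ENNReal.ofReal b)⁻¹ ^ wordLength SH h ≠ ∞ := by
    refine ne_top_of_le_ne_top ?_ (tsum_pow_wordLength_le hSHfin hSHsym hSHgen _)
    rw [hb, ENNReal.inv_ne_top, ← div_eq_mul_inv, ← pos_iff_ne_zero, tsub_pos_iff_lt]
    exact ENNReal.div_lt_of_lt_mul
      (by rw [one_mul]; exact ENNReal.lt_add_right (by simp) one_ne_zero)
  set F : X → ℝ≥0∞ := fun x => ENNReal.ofReal (Real.log b) * wordLength SH (σ g x) +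
    ∑' h, (ENNReal.ofReal b)⁻¹ ^ wordLength SH h
  have hF : ∫⁻ x, F x ∂μ ≠ ∞ := by
    rw [lintegral_add_right _ measurable_const, lintegral_const_mul' _ _ ENNReal.ofReal_ne_top,
      lintegral_const, measure_univ, mul_one]
    exact ENNReal.add_ne_top.2 ⟨ENNReal.mul_ne_top ENNReal.ofReal_ne_top (hσint g), hK⟩
  obtain ⟨δ₁, hδ₁, h₁⟩ := exists_pos_setEntropy_lt μ (half_pos hε)
  obtain ⟨δ₂, hδ₂, h₂⟩ :=
    exists_pos_setLIntegral_lt_of_measure_lt hF (ENNReal.ofReal_pos.2 (half_pos hε)).ne'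
  obtain ⟨δ, -, hδ0, hδ⟩ := ENNReal.lt_iff_exists_real_btwn.1 (lt_min hδ₁ hδ₂)
  refine ⟨δ, ENNReal.ofReal_pos.1 hδ0, fun U hU hUδ => ?_⟩
  have hUδ := hUδ.trans hδ
  calc partialObsEntropy μ (σ g) U ≤ setEntropy μ U + ∫⁻ x in U, F x ∂μ :=
        add_le_add le_rfl
          (mul_obsEntropy_cond_le_setLIntegral μ (hσmeas g) _ (Nat.cast_add_one_pos _) U)
    _ < ENNReal.ofReal (ε / 2) + ENNReal.ofReal (ε / 2) :=
        ENNReal.add_lt_add (h₁ U hU (hUδ.trans_le (min_le_left _ _)))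
          (h₂ U (hUδ.trans_le (min_le_right _ _)))
    _ = ENNReal.ofReal ε := by
        rw [← ENNReal.ofReal_add (half_pos hε).le (half_pos hε).le, add_halves]

theorem stmt2 {G H X : Type*} [Group G] [Group H]
    [MeasurableSpace X] [StandardBorelSpace X]
    (SG : Set G) (hSGfin : SG.Finite) (hSGsym : ∀ s ∈ SG, s⁻¹ ∈ SG)
    (hSGgen : Subgroup.closure SG = ⊤)
    (SH : Set H) (hSHfin : SH.Finite) (hSHsym : ∀ s ∈ SH, s⁻¹ ∈ SH)
    (hSHgen : Subgroup.closure SH = ⊤)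
    (μ : Measure X) [IsProbabilityMeasure μ]
    (T : G → X → X) (hT1 : T 1 = id) (hTmul : ∀ g k : G, T (g * k) = T g ∘ T k)
    (hTmp : ∀ g : G, MeasurePreserving (T g) μ μ)
    (σ : G → X → H)
    (hσmeas : ∀ (g : G) (h : H), MeasurableSet {x : X | σ g x = h})
    (hσcoc : ∀ (g k : G) (x : X), σ (g * k) x = σ g (T k x) * σ k x)
    (hσint : ∀ g : G, (∫⁻ x, (wordLength SH (σ g x) : ℝ≥0∞) ∂μ) ≠ ∞)
    (g : G) {ε : ℝ} (hε : 0 < ε) :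
    ∃ δ : ℝ, 0 < δ ∧ ∀ U : Set X, MeasurableSet U → μ U < ENNReal.ofReal δ →
      partialObsEntropy μ (σ g) U < ENNReal.ofReal ε :=
  stmt2_general SH hSHfin hSHsym hSHgen μ σ hσmeas hσint g hε
end

section
/- Let G be a finitely generated group, with word length |·|_G and balls B_G(r) = {g ∈ G : |g|_G ≤ r} relative to a finite symmetric generating set. If G has super-linear growth, i.e. |B_G(n)|/n → ∞ as n → ∞, then its growth is at least quadratic: there is a constant c_1 > 0 such that |B_G(r)| ≥ c_1 r^2 for all real r ≥ 1. -/
open Filter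

/-- The ball `B_G(r) = {g : |g|_G ≤ r}`. -/
def wordBall {G : Type*} [Group G] (S : Set G) (r : ℝ) : Set G :=
  {g : G | (wordLength S g : ℝ) ≤ r}

open Finset

/-!
If some sphere `S(k)` had at most `k` elements, pick for every `g` its lexicographically least
geodesic word `N g`. These normal forms are closed under taking factors, so each `N g` has at most
`|S(k)| ≤ k` distinct factors of length `k`. A finite Morse–Hedlund argument then shows that
`N g` is periodic, with period at most `k`, between a prefix of length at most `2k` and a suffix
of length `k`; hence `N g` is determined by boundedly much data, the spheres are uniformly
bounded and the growth is linear, contradicting the hypothesis. Therefore `|S(m)| ≥ m + 1` for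
every `m`, and summing over the spheres gives `|B(n)| ≥ n² / 2`.
-/

lemma exists_lt_succ_le_of_le {a : ℕ → ℕ} {k : ℕ} (h0 : 1 ≤ a 0) (hk : a k ≤ k) :
    ∃ m < k, a (m + 1) ≤ a m := by
  by_contra! h
  have hgrow : ∀ m ≤ k, m + 1 ≤ a m := by
    intro m hm
    induction m with
    | zero => simpa using h0
    | succ m ih => have := h m (by omega); have := ih (by omega); omega
  have := hgrow k le_rfl
  omega

section Words

variable {α : Type*}

lemma finite_words {A : Set α} (hA : A.Finite) (n : ℕ) :
    {l : List α | l.length ≤ n ∧ ∀ x ∈ l, x ∈ A}.Finite := by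
  have := hA.to_subtype
  refine ((List.finite_length_le A n).image (List.map Subtype.val)).subset ?_
  rintro l ⟨hlen, hl⟩
  lift l to List A using hl
  exact ⟨l, by simpa using hlen, rfl⟩

def PeriodicOn (w : List α) (p i j : ℕ) : Prop :=
  ∀ s, i ≤ s → s + p < j → w[s]? = w[s + p]?

lemma eq_of_periodicOn {w w' : List α} {p i j : ℕ} (hp : 0 < p) (hw : PeriodicOn w p i j)
    (hw' : PeriodicOn w' p i j) (htake : w.take (i + p) = w'.take (i + p))
    (hdrop : w.drop j = w'.drop j) : w = w' := by
  refine List.ext_getElem? fun t => ?_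
  induction t using Nat.strong_induction_on with
  | _ t ih =>
    by_cases hti : t < i + p
    · simpa [List.getElem?_take, hti] using congrArg (·[t]?) htake
    by_cases htj : j ≤ t
    · simpa [List.getElem?_drop, Nat.add_sub_cancel' htj] using congrArg (·[t - j]?) hdrop
    have hshift : t - p + p = t := Nat.sub_add_cancel (by omega)
    calc w[t]? = w[t - p]? := by rw [hw (t - p) (by omega) (by omega), hshift]
      _ = w'[t - p]? := ih _ (by omega)
      _ = w'[t]? := by rw [hw' (t - p) (by omega) (by omega), hshift]

lemma periodicOn_of_take_drop_eq {w : List α} {m N i j : ℕ}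
    (hdet : ∀ s ≤ N, ∀ t ≤ N, (w.drop s).take m = (w.drop t).take m →
      (w.drop s).take (m + 1) = (w.drop t).take (m + 1))
    (hij : i < j) (heq : (w.drop i).take m = (w.drop j).take m) :
    PeriodicOn w (j - i) (i + m) N := by
  have hprop : ∀ t, j + t ≤ N →
      (w.drop (i + t)).take (m + 1) = (w.drop (j + t)).take (m + 1) := by
    intro t ht
    induction t with
    | zero => exact hdet i (by omega) j (by omega) heq
    | succ t ih =>
      refine hdet _ (by omega) _ (by omega) ?_
      simpa [List.drop_take, List.drop_drop, Nat.add_assoc, Nat.add_comm 1] using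
        congrArg (List.drop 1) (ih (by omega))
  intro s hs hsN
  have := congrArg (·[m]?) (hprop (s - i - m) (by omega))
  simp only [List.getElem?_take, List.getElem?_drop, lt_add_iff_pos_right, zero_lt_one,
    if_true] at this
  convert this using 2 <;> omega

variable [DecidableEq α]

def factors (w : List α) (m : ℕ) : Finset (List α) :=
  (range (w.length + 1 - m)).image fun s => (w.drop s).take m

lemma exists_periodicOn_of_card_factors_le {w : List α} {k : ℕ} (hn : 2 * k ≤ w.length)
    (h : #(factors w k) ≤ k) :
    ∃ i ≤ 2 * k, ∃ p, 0 < p ∧ p ≤ k ∧ PeriodicOn w p i (w.length - k) := by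
  set F : ℕ → Finset (List α) := fun m => (factors w k).image (List.take m) with hF
  -- `#(F m)` grows from `1` to at most `k`, so it stalls at some `m < k`: there every window of
  -- length `m` starting at least `k` letters before the end determines the next letter, and a
  -- repeated window among the first `k + 1` positions propagates to a period.
  have hF_succ : ∀ m, (F (m + 1)).image (List.take m) = F m := by
    intro m
    simp only [hF, image_image, Function.comp_def, List.take_take,
      min_eq_left (Nat.le_succ m)]
  have hF_mono : Monotone fun m => #(F m) :=
    monotone_nat_of_le_succ fun m => hF_succ m ▸ card_image_le
  have hF_zero : 1 ≤ #(F 0) :=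
    card_pos.2 ((image_nonempty.2 (nonempty_range_iff.2 (by omega))).image _)
  have hF_k : #(F k) ≤ k := card_image_le.trans h
  obtain ⟨m, hmk, hm⟩ := exists_lt_succ_le_of_le (a := fun m => #(F m)) hF_zero hF_k
  have hinj : Set.InjOn (List.take m) (F (m + 1) : Set (List α)) :=
    card_image_iff.1 (le_antisymm card_image_le (hF_succ m ▸ hm))
  have hmem : ∀ s ≤ w.length - k, ∀ l ≤ k, (w.drop s).take l ∈ F l := fun s hs l hl =>
    mem_image.2 ⟨(w.drop s).take k, mem_image.2 ⟨s, mem_range.2 (by omega), rfl⟩,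
      by simp [List.take_take, hl]⟩
  have hdet : ∀ s ≤ w.length - k, ∀ t ≤ w.length - k, (w.drop s).take m = (w.drop t).take m →
      (w.drop s).take (m + 1) = (w.drop t).take (m + 1) := fun s hs t ht hst =>
    hinj (hmem s hs _ hmk) (hmem t ht _ hmk) (by simpa [List.take_take] using hst)
  have hcard : #(F m) < #(range (k + 1)) := by
    have : #(F m) ≤ #(F k) := hF_mono hmk.le
    rw [card_range]
    omega
  obtain ⟨i, hi, j, hj, hne, heq⟩ := exists_ne_map_eq_of_card_lt_of_maps_to hcard
    (f := fun s => (w.drop s).take m) fun s hs =>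
      hmem s (by rw [coe_range, Set.mem_Iio] at hs; omega) m hmk.le
  simp only [mem_range] at hi hj
  rcases hne.lt_or_gt with hij | hij
  · exact ⟨i + m, by omega, j - i, by omega, by omega, periodicOn_of_take_drop_eq hdet hij heq⟩
  · exact ⟨j + m, by omega, i - j, by omega, by omega,
      periodicOn_of_take_drop_eq hdet hij heq.symm⟩

lemma exists_ncard_le_of_card_factors_le {A : Set α} (hA : A.Finite) (k : ℕ) :
    ∃ C, ∀ n, 2 * k ≤ n →
      {w : List α | w.length = n ∧ (∀ x ∈ w, x ∈ A) ∧ #(factors w k) ≤ k}.ncard ≤ C := by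
  set W := {l : List α | l.length ≤ 3 * k ∧ ∀ x ∈ l, x ∈ A}
  set T := Set.Iic (2 * k) ×ˢ Set.Iic k ×ˢ W ×ˢ W
  refine ⟨T.ncard, fun n hn => ?_⟩
  have hdata : ∀ w : List α, ∃ d : ℕ × ℕ, w.length = n → #(factors w k) ≤ k →
      d.1 ≤ 2 * k ∧ 0 < d.2 ∧ d.2 ≤ k ∧ PeriodicOn w d.2 d.1 (n - k) := by
    intro w
    by_cases hw : w.length = n ∧ #(factors w k) ≤ k
    · obtain ⟨i, hi, p, hp, hpk, hper⟩ :=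
        exists_periodicOn_of_card_factors_le (hw.1 ▸ hn) hw.2
      exact ⟨(i, p), fun hlen _ => ⟨hi, hp, hpk, hlen ▸ hper⟩⟩
    · exact ⟨(0, 0), fun hlen hw' => (hw ⟨hlen, hw'⟩).elim⟩
  choose d hd using hdata
  refine Set.ncard_le_ncard_of_injOn
    (fun w => ((d w).1, (d w).2, w.take ((d w).1 + (d w).2), w.drop (n - k))) ?_ ?_
    ((Set.finite_Iic _).prod ((Set.finite_Iic _).prod
      ((finite_words hA _).prod (finite_words hA _))))
  · rintro w ⟨hlen, hwA, hk⟩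
    obtain ⟨hi, -, hp, -⟩ := hd w hlen hk
    refine ⟨hi, hp, ⟨List.length_take_le _ _ |>.trans (by omega),
      fun x hx => hwA x (List.mem_of_mem_take hx)⟩,
      ⟨by rw [List.length_drop]; omega, fun x hx => hwA x (List.mem_of_mem_drop hx)⟩⟩
  · rintro w ⟨hlen, -, hk⟩ w' ⟨hlen', -, hk'⟩ heq
    simp only [Prod.mk.injEq] at heq
    obtain ⟨h1, h2, htake, hdrop⟩ := heq
    obtain ⟨-, hp, -, hper⟩ := hd w hlen hk
    obtain ⟨-, -, -, hper'⟩ := hd w' hlen' hk'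
    rw [← h1, ← h2] at hper' htake
    exact eq_of_periodicOn hp hper hper' htake hdrop

end Words

lemma List.append_lt_append_of_lt_of_length_eq {β : Type*} [LinearOrder β] {a b c d : List β}
    (h : a < b) (hlen : a.length = b.length) : a ++ c < b ++ d := by
  induction a generalizing b with
  | nil =>
    obtain rfl := List.length_eq_zero_iff.1 hlen.symm
    exact absurd h (lt_irrefl _)
  | cons x a ih =>
    obtain _ | ⟨y, b⟩ := b
    · simp at hlen
    · rw [List.cons_lt_cons_iff] at h
      rw [List.cons_append, List.cons_append, List.cons_lt_cons_iff]
      exact h.imp_right fun h => ⟨h.1, ih h.2 (by simpa using hlen)⟩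

lemma not_tendsto_div_atTop_of_le_linear {f : ℕ → ℕ} {A C : ℕ} (h : ∀ n, f n ≤ A + C * n) :
    ¬Tendsto (fun n : ℕ => (f n : ℝ) / n) atTop atTop := by
  intro hf
  obtain ⟨n, hlt, hn⟩ := ((hf.eventually_gt_atTop (A + C)).and (eventually_ge_atTop 1)).exists
  have hn' : (1 : ℝ) ≤ n := by exact_mod_cast hn
  rw [lt_div_iff₀ (by positivity)] at hlt
  have : (f n : ℝ) ≤ A + C * n := by exact_mod_cast h n
  nlinarith

section WordMetric

variable {G : Type*} [Group G] {S : Set G}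

lemma Submonoid.closure_eq_top_of_inv_mem (hSsym : ∀ s ∈ S, s⁻¹ ∈ S)
    (hSgen : Subgroup.closure S = ⊤) : Submonoid.closure S = ⊤ := by
  have hinv : S⁻¹ ⊆ S := fun s hs => by simpa using hSsym _ hs
  rw [← Set.union_eq_left.2 hinv, ← Subgroup.closure_toSubmonoid, hSgen,
    Subgroup.top_toSubmonoid]

lemma wordLength_prod_le {l : List G} (hl : ∀ x ∈ l, x ∈ S) : wordLength S l.prod ≤ l.length :=
  Nat.sInf_le ⟨l, rfl, hl, rfl⟩

def wordSphere (S : Set G) (n : ℕ) : Set G :=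
  {g | wordLength S g = n}

lemma wordBall_mono : Monotone (wordBall S) :=
  fun _ _ h _ hg => (hg : _ ≤ _).trans h

lemma wordBall_natFloor {r : ℝ} (hr : 0 ≤ r) : wordBall S ⌊r⌋₊ = wordBall S r := by
  ext g
  simp only [wordBall, Set.mem_ofPred_eq, Nat.cast_le, Nat.le_floor_iff hr]

lemma wordBall_natCast_succ (n : ℕ) :
    wordBall S (n + 1 : ℕ) = wordBall S n ∪ wordSphere S (n + 1) := by
  ext g
  simp only [wordBall, wordSphere, Set.mem_union, Set.mem_ofPred_eq, Nat.cast_le]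
  omega

def IsGeodesic (S : Set G) (l : List G) : Prop :=
  (∀ x ∈ l, x ∈ S) ∧ l.length = wordLength S l.prod

lemma IsGeodesic.length_eq {u v : List G} (hu : IsGeodesic S u) (hv : IsGeodesic S v)
    (h : u.prod = v.prod) : u.length = v.length := by
  rw [hu.2, hv.2, h]

variable (hS : Submonoid.closure S = ⊤)
include hS

lemma exists_length_eq_wordLength (g : G) :
    ∃ l : List G, (∀ x ∈ l, x ∈ S) ∧ l.prod = g ∧ l.length = wordLength S g := by
  obtain ⟨l, hl, rfl⟩ := Submonoid.exists_list_of_mem_closure (hS ▸ Submonoid.mem_top g)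
  obtain ⟨l', hlen, hl', hprod⟩ := Nat.sInf_mem (s := {n | ∃ l' : List G, l'.length = n ∧
    (∀ s ∈ l', s ∈ S) ∧ l'.prod = l.prod}) ⟨_, l, rfl, hl, rfl⟩
  exact ⟨l', hl', hprod, hlen⟩

lemma wordLength_mul_le (a b : G) : wordLength S (a * b) ≤ wordLength S a + wordLength S b := by
  obtain ⟨u, hu, rfl, hua⟩ := exists_length_eq_wordLength hS a
  obtain ⟨v, hv, rfl, hvb⟩ := exists_length_eq_wordLength hS b
  rw [← hua, ← hvb, ← List.length_append, ← List.prod_append]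
  exact wordLength_prod_le (by simpa [or_imp, forall_and] using ⟨hu, hv⟩)

lemma IsGeodesic.of_append {u v : List G} (h : IsGeodesic S (u ++ v)) :
    IsGeodesic S u ∧ IsGeodesic S v := by
  have hu := wordLength_prod_le fun x hx => h.1 x (List.mem_append_left v hx)
  have hv := wordLength_prod_le fun x hx => h.1 x (List.mem_append_right u hx)
  have huv := wordLength_mul_le hS u.prod v.prod
  have := h.2
  rw [List.length_append, List.prod_append] at this
  exact ⟨⟨fun x hx => h.1 x (List.mem_append_left v hx), by omega⟩,
    ⟨fun x hx => h.1 x (List.mem_append_right u hx), by omega⟩⟩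

lemma IsGeodesic.append_of_prod_eq {u v u' v' : List G} (h : IsGeodesic S (u ++ v))
    (hu' : IsGeodesic S u') (hv' : IsGeodesic S v') (hu : u'.prod = u.prod)
    (hv : v'.prod = v.prod) : IsGeodesic S (u' ++ v') := by
  obtain ⟨hgu, hgv⟩ := h.of_append hS
  refine ⟨fun x hx => (List.mem_append.1 hx).elim (hu'.1 x) (hv'.1 x), ?_⟩
  rw [List.length_append, hu'.length_eq hgu hu, hv'.length_eq hgv hv, ← List.length_append,
    h.2, List.prod_append, List.prod_append, hu, hv]

lemma finite_wordBall (hSfin : S.Finite) (r : ℝ) : (wordBall S r).Finite := by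
  refine ((finite_words hSfin ⌊r⌋₊).image List.prod).subset fun g hg => ?_
  obtain ⟨l, hl, rfl, hlen⟩ := exists_length_eq_wordLength hS g
  exact ⟨l, ⟨hlen ▸ Nat.le_floor hg, hl⟩, rfl⟩

variable (hSfin : S.Finite)
include hSfin

lemma finite_wordSphere (n : ℕ) : (wordSphere S n).Finite :=
  (finite_wordBall hS hSfin n).subset fun g (hg : wordLength S g = n) =>
    show (wordLength S g : ℝ) ≤ n from Nat.cast_le.2 hg.le

lemma ncard_wordBall_succ (n : ℕ) :
    (wordBall S (n + 1 : ℕ)).ncard = (wordBall S n).ncard + (wordSphere S (n + 1)).ncard := by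
  rw [wordBall_natCast_succ, Set.ncard_union_eq _ (finite_wordBall hS hSfin n)
    (finite_wordSphere hS hSfin _)]
  refine Set.disjoint_left.2 fun g hg hg' => ?_
  simp only [wordBall, wordSphere, Set.mem_ofPred_eq, Nat.cast_le] at hg hg'
  omega

lemma sq_le_two_mul_ncard_wordBall (hsph : ∀ m, m + 1 ≤ (wordSphere S m).ncard)
    (n : ℕ) : n ^ 2 ≤ 2 * (wordBall S n).ncard := by
  induction n with
  | zero => simp
  | succ n ih =>
    rw [ncard_wordBall_succ hS hSfin]
    have := hsph (n + 1)
    nlinarith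

lemma ncard_wordBall_le_linear {C n₀ : ℕ} (hC : ∀ n, n₀ ≤ n → (wordSphere S n).ncard ≤ C)
    (n : ℕ) : (wordBall S n).ncard ≤ (wordBall S n₀).ncard + C * n := by
  induction n with
  | zero =>
    exact (Set.ncard_le_ncard (wordBall_mono (Nat.cast_le.2 (Nat.zero_le n₀)))
      (finite_wordBall hS hSfin _)).trans (Nat.le_add_right _ _)
  | succ n ih =>
    rcases le_or_gt n₀ (n + 1) with h | h
    · rw [ncard_wordBall_succ hS hSfin]
      have := hC (n + 1) h
      nlinarith
    · exact (Set.ncard_le_ncard (wordBall_mono (Nat.cast_le.2 h.le))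
        (finite_wordBall hS hSfin _)).trans (Nat.le_add_right _ _)

end WordMetric

section LexNormalForm

variable {G : Type*} [Group G] {S : Set G} {β : Type*} [LinearOrder β] {ι : G → β}

def IsLexNormalForm (S : Set G) (ι : G → β) (N : G → List G) : Prop :=
  ∀ g, IsGeodesic S (N g) ∧ (N g).prod = g ∧
    ∀ l, IsGeodesic S l → l.prod = g → (N g).map ι ≤ l.map ι

lemma exists_isLexNormalForm (hSfin : S.Finite) (hS : Submonoid.closure S = ⊤) (ι : G → β) :
    ∃ N, IsLexNormalForm S ι N := by
  have hmin : ∀ g : G, ∃ l ∈ {l | IsGeodesic S l ∧ l.prod = g},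
      ∀ l' ∈ {l | IsGeodesic S l ∧ l.prod = g}, l.map ι ≤ l'.map ι := by
    intro g
    refine Set.exists_min_image _ _ ((finite_words hSfin (wordLength S g)).subset ?_) ?_
    · rintro l ⟨hl, rfl⟩
      exact ⟨hl.2.le, hl.1⟩
    · obtain ⟨l, hl, hprod, hlen⟩ := exists_length_eq_wordLength hS g
      exact ⟨l, ⟨hl, hprod ▸ hlen⟩, hprod⟩
  choose N hN hNmin using hmin
  exact ⟨N, fun g => ⟨(hN g).1, (hN g).2, fun l hl hprod => hNmin g l ⟨hl, hprod⟩⟩⟩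

namespace IsLexNormalForm

variable {N : G → List G} (hN : IsLexNormalForm S ι N) (hι : Function.Injective ι)
  (hS : Submonoid.closure S = ⊤)
include hN hι hS

lemma prod_take {g : G} {u v : List G} (h : N g = u ++ v) : N u.prod = u := by
  have hguv : IsGeodesic S (u ++ v) := h ▸ (hN g).1
  obtain ⟨hgu, hgv⟩ := hguv.of_append hS
  obtain ⟨hu', hu'prod, hu'min⟩ := hN u.prod
  refine List.map_injective_iff.2 hι (le_antisymm (hu'min u hgu rfl) (not_lt.1 fun hlt => ?_))
  have hle := (hN g).2.2 (N u.prod ++ v) (hguv.append_of_prod_eq hS hu' hgv hu'prod rfl)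
    (by rw [List.prod_append, hu'prod, ← List.prod_append, ← h, (hN g).2.1])
  rw [h, List.map_append, List.map_append] at hle
  exact not_lt.2 hle (List.append_lt_append_of_lt_of_length_eq hlt
    (by simp [hu'.length_eq hgu hu'prod]))

lemma prod_drop {g : G} {u v : List G} (h : N g = u ++ v) : N v.prod = v := by
  have hguv : IsGeodesic S (u ++ v) := h ▸ (hN g).1
  obtain ⟨hgu, hgv⟩ := hguv.of_append hS
  obtain ⟨hv', hv'prod, hv'min⟩ := hN v.prod
  refine List.map_injective_iff.2 hι (le_antisymm (hv'min v hgv rfl) (not_lt.1 fun hlt => ?_))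
  have hle := (hN g).2.2 (u ++ N v.prod) (hguv.append_of_prod_eq hS hgu hv' rfl hv'prod)
    (by rw [List.prod_append, hv'prod, ← List.prod_append, ← h, (hN g).2.1])
  rw [h, List.map_append, List.map_append] at hle
  exact not_lt.2 hle (List.append_left_lt hlt)

lemma prod_take_drop (g : G) (s m : ℕ) :
    N (((N g).drop s).take m).prod = ((N g).drop s).take m := by
  have hdrop := hN.prod_drop hι hS (List.take_append_drop s (N g)).symm
  exact hN.prod_take hι hS (v := ((N g).drop s).drop m) (by rw [hdrop, List.take_append_drop])

lemma card_factors_le_ncard_wordSphere [DecidableEq G] (hSfin : S.Finite) (g : G) (m : ℕ) :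
    #(factors (N g) m) ≤ (wordSphere S m).ncard := by
  rw [← Set.ncard_coe_finset]
  refine Set.ncard_le_ncard_of_injOn List.prod ?_ ?_ (finite_wordSphere hS hSfin m)
  · intro f hf
    obtain ⟨s, hs, rfl⟩ := mem_image.1 hf
    have hgeod := (hN (((N g).drop s).take m).prod).1.2
    rw [hN.prod_take_drop hι hS] at hgeod
    rw [mem_range] at hs
    show wordLength S _ = m
    rw [← hgeod]
    simp only [List.length_take, List.length_drop]
    omega
  · rintro f hf f' hf' h
    obtain ⟨s, -, rfl⟩ := mem_image.1 hf
    obtain ⟨s', -, rfl⟩ := mem_image.1 hf'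
    rw [← hN.prod_take_drop hι hS g s m, ← hN.prod_take_drop hι hS g s' m]
    exact congrArg N h

end IsLexNormalForm

end LexNormalForm

theorem exists_ncard_wordSphere_le {G : Type*} [Group G] {S : Set G} (hSfin : S.Finite)
    (hS : Submonoid.closure S = ⊤) {k : ℕ} (hk : (wordSphere S k).ncard ≤ k) :
    ∃ C, ∀ n, 2 * k ≤ n → (wordSphere S n).ncard ≤ C := by
  classical
  obtain ⟨N, hN⟩ := exists_isLexNormalForm hSfin hS embeddingToCardinal
  obtain ⟨C, hC⟩ := exists_ncard_le_of_card_factors_le hSfin k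
  refine ⟨C, fun n hn => (Set.ncard_le_ncard_of_injOn N ?_ ?_
    ((finite_words hSfin n).subset ?_)).trans (hC n hn)⟩
  · intro g hg
    refine ⟨?_, (hN g).1.1, (hN.card_factors_le_ncard_wordSphere embeddingToCardinal.injective hS
      hSfin g k).trans hk⟩
    rw [(hN g).1.2, (hN g).2.1]
    exact hg
  · intro g _ g' _ h
    rw [← (hN g).2.1, ← (hN g').2.1, h]
  · rintro w ⟨hlen, hw, -⟩
    exact ⟨hlen.le, hw⟩

theorem stmt11 {G : Type*} [Group G] (S : Set G) (hSfin : S.Finite)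
    (hSsym : ∀ s ∈ S, s⁻¹ ∈ S) (hSgen : Subgroup.closure S = ⊤)
    -- super-linear growth: |B_G(n)|/n → ∞
    (hgrowth : Tendsto (fun n : ℕ => (((wordBall S n).ncard : ℝ) / (n : ℝ))) atTop atTop) :
    -- growth is at least quadratic
    ∃ c : ℝ, 0 < c ∧ ∀ r : ℝ, 1 ≤ r → c * r ^ 2 ≤ ((wordBall S r).ncard : ℝ) := by
  have hS := Submonoid.closure_eq_top_of_inv_mem hSsym hSgen
  have hsph : ∀ m, m + 1 ≤ (wordSphere S m).ncard := by
    intro m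
    by_contra! hsmall
    obtain ⟨C, hC⟩ := exists_ncard_wordSphere_le hSfin hS (k := m) (by omega)
    exact not_tendsto_div_atTop_of_le_linear (ncard_wordBall_le_linear hS hSfin hC) hgrowth
  refine ⟨1 / 8, by norm_num, fun r hr => ?_⟩
  have hn : (1 : ℝ) ≤ ⌊r⌋₊ := by exact_mod_cast Nat.one_le_floor_iff r |>.2 hr
  have hr' : r < ⌊r⌋₊ + 1 := Nat.lt_floor_add_one r
  have hquad : ((⌊r⌋₊ : ℕ) : ℝ) ^ 2 ≤ 2 * (wordBall S r).ncard := by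
    rw [← wordBall_natFloor (by linarith)]
    exact_mod_cast sq_le_two_mul_ncard_wordBall hS hSfin hsph _
  nlinarith
end
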